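/- Fix w ∈ ℝ (a weight), g ∈ ℝ (a loss-gradient coefficient), σ' > 0, and c > 0 constants. The linear ODE λ'(t) = c(λ(t) − σ' w μ(t) − g) (where μ is a fixed continuous bounded function representing children costates) has the property that if λ_c denotes a solution that remains bounded uniformly in c on [0,T], then for every t in (0,T), (λ_c(t) − σ' w μ(t) − g) → 0 as c → ∞, i.e., in the formal limit of infinite propagation speed the dynamical equation reduces to the algebraic backpropagation relation λ = σ' w μ + g. -/

import Mathlib

/-!
Put `F = σ' w μ + g`, so that `λ' = c (λ - F)`. With an integrating factor, a deviation
`λ(t₀) - F(t₀)` exceeding the oscillation of `F` on `[t₀, t₀ + h]` is amplified by the factor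
`exp (c h)` by time `t₀ + h`. Since `λ` stays bounded uniformly in `c`, the deviation is at most
that oscillation plus `O(exp (-c h))`, and continuity of `F` makes the oscillation small.
-/

open Filter Set Real Topology

lemma exp_mul_sub_le_of_hasDerivAt {L F : ℝ → ℝ} {c K a b : ℝ} (hc : 0 ≤ c) (hab : a ≤ b)
    (hL : ∀ s ∈ Icc a b, HasDerivAt L (c * (L s - F s)) s) (hF : ∀ s ∈ Icc a b, F s ≤ K) :
    exp (c * (b - a)) * (L a - K) ≤ L b - K := by
  -- integrating factor: `φ` is nondecreasing because `F ≤ K`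
  set φ : ℝ → ℝ := fun s => exp (-(c * s)) * (L s - K)
  have hφ : ∀ s ∈ Icc a b, HasDerivAt φ (exp (-(c * s)) * (c * (K - F s))) s := fun s hs =>
    (((hasDerivAt_id' s).const_mul c).fun_neg.exp.fun_mul ((hL s hs).sub_const K)).congr_deriv
      (by ring)
  have hmono : MonotoneOn φ (Icc a b) := by
    refine monotoneOn_of_hasDerivWithinAt_nonneg (f' := fun s => exp (-(c * s)) * (c * (K - F s)))
      (convex_Icc a b)
      (fun s hs => (hφ s hs).continuousAt.continuousWithinAt) (fun s hs => ?_) (fun s hs => ?_)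
    · exact (hφ s (interior_subset hs)).hasDerivWithinAt
    · exact mul_nonneg (exp_pos _).le (mul_nonneg hc (sub_nonneg.2 (hF s (interior_subset hs))))
  have hφab : φ a ≤ φ b := hmono (left_mem_Icc.2 hab) (right_mem_Icc.2 hab) hab
  have hexp : exp (c * (b - a)) = exp (c * b) * exp (-(c * a)) := by
    rw [← exp_add]; congr 1; ring
  calc exp (c * (b - a)) * (L a - K) = exp (c * b) * φ a := by rw [hexp]; ring
    _ ≤ exp (c * b) * φ b := by gcongr
    _ = L b - K := by
      simp only [φ, ← mul_assoc, ← exp_add, add_neg_cancel, exp_zero, one_mul]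

lemma exp_mul_abs_sub_le_of_hasDerivAt {L F : ℝ → ℝ} {c η a b : ℝ} (hc : 0 ≤ c) (hab : a ≤ b)
    (hL : ∀ s ∈ Icc a b, HasDerivAt L (c * (L s - F s)) s)
    (hF : ∀ s ∈ Icc a b, |F s - F a| ≤ η) :
    exp (c * (b - a)) * (|L a - F a| - η) ≤ |L b - F a| - η := by
  have above := exp_mul_sub_le_of_hasDerivAt (K := F a + η) hc hab hL
    fun s hs => by linarith [(abs_le.1 (hF s hs)).2]
  have below := exp_mul_sub_le_of_hasDerivAt (L := (- L ·)) (F := (- F ·)) (K := -F a + η) hc hab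
    (fun s hs => (hL s hs).fun_neg.congr_deriv (by ring))
    fun s hs => by linarith [(abs_le.1 (hF s hs)).1]
  rcases le_total 0 (L a - F a) with h | h
  · rw [abs_of_nonneg h]
    linarith [le_abs_self (L b - F a)]
  · rw [abs_of_nonpos h]
    linarith [neg_abs_le (L b - F a)]

theorem tendsto_sub_of_hasDerivAt_mul_sub {L : ℝ → ℝ → ℝ} {F : ℝ → ℝ} {t₀ b M : ℝ}
    (htb : t₀ < b) (hF : ContinuousWithinAt F (Ici t₀) t₀)
    (hL : ∀ c > 0, ∀ s ∈ Icc t₀ b, HasDerivAt (L c) (c * (L c s - F s)) s)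
    (hM : ∀ c > 0, ∀ s ∈ Icc t₀ b, |L c s| ≤ M) :
    Tendsto (fun c => L c t₀ - F t₀) atTop (𝓝 0) := by
  rw [Metric.tendsto_nhds]
  intro ε hε
  obtain ⟨δ, hδ, hFδ⟩ := Metric.continuousWithinAt_iff.1 hF (ε / 2) (half_pos hε)
  set h := min (δ / 2) (b - t₀)
  have hh : 0 < h := lt_min (half_pos hδ) (sub_pos.2 htb)
  have hsub : Icc t₀ (t₀ + h) ⊆ Icc t₀ b :=
    Icc_subset_Icc_right (by linarith [min_le_right (δ / 2) (b - t₀)])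
  have hFh : ∀ s ∈ Icc t₀ (t₀ + h), |F s - F t₀| ≤ ε / 2 := fun s hs => by
    refine (hFδ hs.1 ?_).le
    rw [Real.dist_eq, abs_of_nonneg (by linarith [hs.1])]
    linarith [hs.2, min_le_left (δ / 2) (b - t₀)]
  have hdev : ∀ c > 0, |L c t₀ - F t₀| - ε / 2 ≤ exp (-(c * h)) * (M + |F t₀|) := by
    intro c hc
    have key := exp_mul_abs_sub_le_of_hasDerivAt hc.le (by linarith)
      (fun s hs => hL c hc s (hsub hs)) hFh
    rw [add_sub_cancel_left] at key
    have hend : |L c (t₀ + h) - F t₀| ≤ M + |F t₀| := by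
      linarith [abs_sub (L c (t₀ + h)) (F t₀), hM c hc _ (hsub (right_mem_Icc.2 (by linarith)))]
    calc |L c t₀ - F t₀| - ε / 2
        = exp (-(c * h)) * (exp (c * h) * (|L c t₀ - F t₀| - ε / 2)) := by
          rw [← mul_assoc, ← exp_add, neg_add_cancel, exp_zero, one_mul]
      _ ≤ exp (-(c * h)) * (M + |F t₀|) := by gcongr; linarith
  have hdecay : Tendsto (fun c => exp (-(c * h)) * (M + |F t₀|)) atTop (𝓝 0) := by
    simpa using (tendsto_exp_neg_atTop_nhds_zero.comp
      (tendsto_id.atTop_mul_const hh)).mul_const (M + |F t₀|)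
  filter_upwards [hdecay.eventually (gt_mem_nhds (half_pos hε)), eventually_gt_atTop 0]
    with c hsmall hc
  rw [Real.dist_eq, sub_zero]
  linarith [hdev c hc]

theorem stmt10_general (T w g σ' : ℝ)
    (μ : ℝ → ℝ) (hμc : Continuous μ)
    (lam : ℝ → ℝ → ℝ)
    (hode : ∀ c > (0:ℝ), ∀ t, HasDerivAt (lam c) (c * (lam c t - σ' * w * μ t - g)) t)
    (hbdd : ∃ M : ℝ, ∀ c > (0:ℝ), ∀ t ∈ Set.Icc (0:ℝ) T, |lam c t| ≤ M) :
    ∀ t ∈ Set.Ioo (0:ℝ) T,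
      Filter.Tendsto (fun c => lam c t - σ' * w * μ t - g) Filter.atTop (nhds 0) := by
  obtain ⟨M, hM⟩ := hbdd
  rintro t ⟨ht0, htT⟩
  simp only [sub_sub]
  refine tendsto_sub_of_hasDerivAt_mul_sub (F := fun s => σ' * w * μ s + g) htT ?_ ?_
    (fun c hc s hs => hM c hc s (Icc_subset_Icc_left ht0.le hs))
  · exact ((continuous_const.mul hμc).add continuous_const).continuousWithinAt
  · intro c hc s _
    simpa only [sub_sub] using hode c hc s

theorem stmt10 (T w g σ' : ℝ) (hT : 0 < T) (hσ : 0 < σ')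
    (μ : ℝ → ℝ) (hμc : Continuous μ) (hμb : ∃ Mμ : ℝ, ∀ t, |μ t| ≤ Mμ)
    (lam : ℝ → ℝ → ℝ)
    (hode : ∀ c > (0:ℝ), ∀ t, HasDerivAt (lam c) (c * (lam c t - σ' * w * μ t - g)) t)
    (hbdd : ∃ M : ℝ, ∀ c > (0:ℝ), ∀ t ∈ Set.Icc (0:ℝ) T, |lam c t| ≤ M) :
    ∀ t ∈ Set.Ioo (0:ℝ) T,
      Filter.Tendsto (fun c => lam c t - σ' * w * μ t - g) Filter.atTop (nhds 0) :=
  stmt10_general T w g σ' μ hμc lam hode hbdd
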